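/- Let G be a tight (1,0)-stable graph on n = 2k vertices (so α(G) = k and α(G \ {v}) = k for all v). Then k ≤ |E(G)| ≤ k², and both bounds are attained (by a perfect matching and by K_{k,k} respectively). -/

import Mathlib

/-!
Write `α` for the independence number and `N(Y)` for the neighbourhood of `Y`. Stability says that
every vertex is missed by some maximum independent set. For `Y` independent and `S` maximum
independent, replacing `S ∩ N(Y)` by `Y \ S` keeps `S` independent, so `#(Y \ S) ≤ #(S ∩ N(Y))`.
Splitting `Y` along a maximum independent set that misses one of its vertices and inducting on the
part inside it, every subset `Y` of an independent set `I` satisfies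
`#Y ≤ #(N(Y) \ (I ∪ W))`, where `W` is any set of vertices lying in no maximum independent set.
For `Y = I` maximum this gives `2α + #W ≤ n`, so when `n = 2α` every vertex lies in a maximum
independent set and has degree at most `n - α = k`. An isolated vertex would extend every maximum
independent set missing it, so all degrees are positive, and the degree-sum formula turns
`1 ≤ deg ≤ k` into `k ≤ |E| ≤ k²`.

The bounds are attained by the perfect matching `i ~ i + k` and by the complete bipartite graph
between the two halves of `Fin (2k)`: for every graph between these two, the independent sets have
at most `k` vertices and both halves are independent `k`-sets, one of which avoids any given vertex.
-/

open SimpleGraph Set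

/-- The independence number of `G` restricted to a vertex subset `A`:
the largest cardinality of a finite set of vertices inside `A` that is
pairwise non-adjacent in `G`. -/
noncomputable def indepNumOn {V : Type*} (G : SimpleGraph V) (A : Set V) : ℕ :=
  sSup {n | ∃ s : Finset V, ↑s ⊆ A ∧ s.card = n ∧
    ∀ x ∈ s, ∀ y ∈ s, x ≠ y → ¬ G.Adj x y}

/-- The independence number of `G`. -/
noncomputable def indepNum {V : Type*} (G : SimpleGraph V) : ℕ :=
  indepNumOn G Set.univ

/-- `G` is `(k, l)`-stable: removing any `k` vertices decreases the
independence number by at most `l`. -/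
def IsStable {V : Type*} (G : SimpleGraph V) (k l : ℕ) : Prop :=
  ∀ S : Finset V, S.card = k → _root_.indepNum G ≤ indepNumOn G (↑S : Set V)ᶜ + l

open Finset

section IndepNumOn

variable {V : Type*} [Fintype V] {G : SimpleGraph V} {A : Set V}

lemma bddAbove_indepNumOn_set : BddAbove {n | ∃ s : Finset V, ↑s ⊆ A ∧ s.card = n ∧
    ∀ x ∈ s, ∀ y ∈ s, x ≠ y → ¬ G.Adj x y} :=
  ⟨Fintype.card V, by rintro n ⟨s, -, rfl, -⟩; exact s.card_le_univ⟩

lemma SimpleGraph.IsIndepSet.card_le_indepNumOn {s : Finset V} (hs : G.IsIndepSet s)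
    (hsA : ↑s ⊆ A) : #s ≤ indepNumOn G A :=
  le_csSup bddAbove_indepNumOn_set ⟨s, hsA, rfl, fun _ hx _ hy => hs hx hy⟩

variable (G A) in
lemma exists_isNIndepSet_indepNumOn :
    ∃ s : Finset V, ↑s ⊆ A ∧ G.IsNIndepSet (indepNumOn G A) s := by
  obtain ⟨s, hsA, hcard, hs⟩ :=
    Nat.sSup_mem (s := {n | ∃ s : Finset V, ↑s ⊆ A ∧ s.card = n ∧
      ∀ x ∈ s, ∀ y ∈ s, x ≠ y → ¬ G.Adj x y}) ⟨0, ∅, by simp, rfl, by simp⟩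
      bddAbove_indepNumOn_set
  exact ⟨s, hsA, fun x hx y hy => hs x hx y hy, hcard⟩

lemma indepNum_eq_indepNum : _root_.indepNum G = G.indepNum := by
  obtain ⟨s, -, hs⟩ := exists_isNIndepSet_indepNumOn G Set.univ
  obtain ⟨t, ht⟩ := G.exists_isNIndepSet_indepNum
  refine le_antisymm ?_ ?_
  · exact hs.card_eq.symm.trans_le hs.isIndepSet.card_le_indepNum
  · exact ht.card_eq ▸ ht.isIndepSet.card_le_indepNumOn (Set.subset_univ _)

lemma indepNumOn_eq_of_isNIndepSet {k : ℕ} (hle : ∀ s : Finset V, G.IsIndepSet s → #s ≤ k)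
    {s : Finset V} (hs : G.IsNIndepSet k s) (hsA : ↑s ⊆ A) : indepNumOn G A = k := by
  obtain ⟨t, -, ht⟩ := exists_isNIndepSet_indepNumOn G A
  exact le_antisymm (ht.card_eq ▸ hle t ht.isIndepSet)
    (hs.card_eq ▸ hs.isIndepSet.card_le_indepNumOn hsA)

end IndepNumOn

namespace SimpleGraph

lemma ncard_edgeSet {V : Type*} (G : SimpleGraph V) [Fintype G.edgeSet] :
    G.edgeSet.ncard = #G.edgeFinset := by
  rw [← coe_edgeFinset, ncard_coe_finset]

variable {V : Type*} [Fintype V] [DecidableEq V] {G : SimpleGraph V} [DecidableRel G.Adj]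

theorem IsIndepSet.card_sdiff_le_card_inter_biUnion_neighborFinset {Y S : Finset V}
    (hY : G.IsIndepSet Y) (hS : G.IsNIndepSet G.indepNum S) :
    #(Y \ S) ≤ #(S ∩ Y.biUnion (G.neighborFinset ·)) := by
  set N := Y.biUnion (G.neighborFinset ·)
  have hT : G.IsIndepSet ↑(S \ N ∪ Y \ S) := by
    intro a ha b hb hab hadj
    simp only [coe_union, coe_sdiff, Set.mem_union, Set.mem_sdiff, mem_coe] at ha hb
    have hN {x y} (hx : x ∈ Y) (hxy : G.Adj x y) : y ∈ N :=
      mem_biUnion.2 ⟨x, hx, (G.mem_neighborFinset x y).2 hxy⟩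
    rcases ha with ⟨haS, haN⟩ | ⟨haY, -⟩ <;> rcases hb with ⟨hbS, hbN⟩ | ⟨hbY, -⟩
    · exact hS.isIndepSet haS hbS hab hadj
    · exact haN (hN hbY hadj.symm)
    · exact hbN (hN haY hadj)
    · exact hY haY hbY hab hadj
  have hdisj : Disjoint (S \ N) (Y \ S) :=
    Finset.disjoint_left.2 fun a ha ha' => (mem_sdiff.1 ha').2 (mem_sdiff.1 ha).1
  have hle := hT.card_le_indepNum
  rw [card_union_of_disjoint hdisj, ← hS.card_eq, ← card_sdiff_add_card_inter S N] at hle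
  omega

theorem card_le_card_biUnion_neighborFinset_sdiff
    (hmiss : ∀ v, ∃ s, v ∉ s ∧ G.IsNIndepSet G.indepNum s) {W : Finset V}
    (hW : ∀ s, G.IsNIndepSet G.indepNum s → Disjoint W s) {I : Finset V}
    (hI : G.IsIndepSet I) {Y : Finset V} (hYI : Y ⊆ I) :
    #Y ≤ #(Y.biUnion (G.neighborFinset ·) \ (I ∪ W)) := by
  induction Y using Finset.strongInduction with
  | H Y ih =>
  obtain rfl | ⟨y, hy⟩ := Y.eq_empty_or_nonempty
  · simp
  obtain ⟨S, hyS, hS⟩ := hmiss y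
  set N : Finset V → Finset V := fun Z => Z.biUnion (G.neighborFinset ·) \ (I ∪ W)
  have hY : G.IsIndepSet Y := Set.Pairwise.mono (coe_subset.2 hYI) hI
  have hout : #(Y \ S) ≤ #(N Y ∩ S) := by
    refine (hY.card_sdiff_le_card_inter_biUnion_neighborFinset hS).trans (card_le_card ?_)
    intro z hz
    simp only [N, Finset.mem_inter, Finset.mem_sdiff, Finset.mem_union, Finset.mem_biUnion,
      mem_neighborFinset] at hz ⊢
    obtain ⟨hzS, x, hxY, hxz⟩ := hz
    exact ⟨⟨⟨x, hxY, hxz⟩, not_or.2 ⟨fun hzI => hI (hYI hxY) hzI hxz.ne hxz,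
      fun hzW => Finset.disjoint_left.1 (hW S hS) hzW hzS⟩⟩, hzS⟩
  have hin : #(Y ∩ S) ≤ #(N Y \ S) := by
    have hsub : Y ∩ S ⊂ Y := ssubset_of_subset_of_ne inter_subset_left
      fun h => hyS (mem_of_mem_inter_right (h ▸ hy))
    refine (ih _ hsub (inter_subset_left.trans hYI)).trans (card_le_card ?_)
    intro z hz
    simp only [N, Finset.mem_inter, Finset.mem_sdiff, Finset.mem_biUnion,
      mem_neighborFinset] at hz ⊢
    obtain ⟨⟨x, ⟨hxY, hxS⟩, hxz⟩, hzIW⟩ := hz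
    exact ⟨⟨⟨x, hxY, hxz⟩, hzIW⟩, fun hzS => hS.isIndepSet hxS hzS hxz.ne hxz⟩
  calc #Y = #(Y \ S) + #(Y ∩ S) := (card_sdiff_add_card_inter Y S).symm
    _ ≤ #(N Y ∩ S) + #(N Y \ S) := add_le_add hout hin
    _ = #(N Y) := by rw [add_comm, card_sdiff_add_card_inter]

theorem two_mul_indepNum_add_card_le (hmiss : ∀ v, ∃ s, v ∉ s ∧ G.IsNIndepSet G.indepNum s)
    {W : Finset V} (hW : ∀ s, G.IsNIndepSet G.indepNum s → Disjoint W s) :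
    2 * G.indepNum + #W ≤ Fintype.card V := by
  obtain ⟨I, hI⟩ := G.exists_isNIndepSet_indepNum
  have hexp := card_le_card_biUnion_neighborFinset_sdiff hmiss hW hI.isIndepSet subset_rfl
  rw [hI.card_eq] at hexp
  have hsub : #(I.biUnion (G.neighborFinset ·) \ (I ∪ W)) ≤ #(I ∪ W)ᶜ :=
    card_le_card fun z hz => mem_compl.2 (Finset.mem_sdiff.1 hz).2
  have hsplit := card_add_card_compl (I ∪ W)
  rw [card_union_of_disjoint (hW I hI).symm, hI.card_eq] at hsplit
  omega

theorem exists_mem_isNIndepSet (hmiss : ∀ v, ∃ s, v ∉ s ∧ G.IsNIndepSet G.indepNum s)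
    (hcard : Fintype.card V = 2 * G.indepNum) (v : V) :
    ∃ s, v ∈ s ∧ G.IsNIndepSet G.indepNum s := by
  by_contra! h
  have := two_mul_indepNum_add_card_le hmiss (W := {v})
    fun s hs => Finset.disjoint_singleton_left.2 fun hv => h s hv hs
  rw [Finset.card_singleton] at this
  omega

theorem IsIndepSet.degree_add_card_le {s : Finset V} (hs : G.IsIndepSet s) {v : V} (hv : v ∈ s) :
    G.degree v + #s ≤ Fintype.card V := by
  have hdisj : Disjoint (G.neighborFinset v) s := Finset.disjoint_left.2 fun w hw hws =>
    hs hv hws (G.ne_of_adj ((G.mem_neighborFinset v w).1 hw)) ((G.mem_neighborFinset v w).1 hw)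
  rw [← card_neighborFinset_eq_degree, ← card_union_of_disjoint hdisj]
  exact card_le_univ _

theorem degree_pos_of_forall_exists_notMem
    (hmiss : ∀ v, ∃ s, v ∉ s ∧ G.IsNIndepSet G.indepNum s) (v : V) : 0 < G.degree v := by
  obtain ⟨s, hvs, hs⟩ := hmiss v
  rw [degree_pos_iff_exists_adj]
  by_contra! hno
  have hind : G.IsIndepSet ↑(insert v s) := by
    rw [coe_insert]
    exact Set.pairwise_insert.2 ⟨hs.isIndepSet, fun w _ _ => ⟨hno w, fun hwv => hno w hwv.symm⟩⟩
  have := hind.card_le_indepNum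
  rw [card_insert_of_notMem hvs, hs.card_eq] at this
  omega

omit [DecidableEq V] in
theorem card_mul_le_two_mul_card_edgeFinset {d : ℕ} (h : ∀ v, d ≤ G.degree v) :
    Fintype.card V * d ≤ 2 * #G.edgeFinset := by
  rw [← sum_degrees_eq_twice_card_edges, ← smul_eq_mul, ← card_univ]
  exact card_nsmul_le_sum _ _ _ fun v _ => h v

omit [DecidableEq V] in
theorem two_mul_card_edgeFinset_le_mul {d : ℕ} (h : ∀ v, G.degree v ≤ d) :
    2 * #G.edgeFinset ≤ Fintype.card V * d := by
  rw [← sum_degrees_eq_twice_card_edges, ← smul_eq_mul, ← card_univ]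
  exact sum_le_card_nsmul _ _ _ fun v _ => h v

omit [DecidableEq V] in
theorem IsRegularOfDegree.two_mul_card_edgeFinset {d : ℕ} (h : G.IsRegularOfDegree d) :
    2 * #G.edgeFinset = Fintype.card V * d :=
  (two_mul_card_edgeFinset_le_mul fun v => (h v).le).antisymm
    (card_mul_le_two_mul_card_edgeFinset fun v => (h v).ge)

end SimpleGraph

section Examples

variable {k : ℕ}

def shiftMatching (k : ℕ) : SimpleGraph (Fin (2 * k)) where
  Adj i j := (i : ℕ) + k = j ∨ (j : ℕ) + k = i
  symm := ⟨fun _ _ => Or.symm⟩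
  loopless := ⟨fun i h => by have := i.isLt; omega⟩

def completeBipartiteHalves (k : ℕ) : SimpleGraph (Fin (2 * k)) where
  Adj i j := (i : ℕ) < k ∧ k ≤ (j : ℕ) ∨ (j : ℕ) < k ∧ k ≤ (i : ℕ)
  symm := ⟨fun _ _ => Or.symm⟩
  loopless := ⟨fun i h => by omega⟩

def lowerHalf (k : ℕ) : Finset (Fin (2 * k)) := {i | (i : ℕ) < k}

lemma shiftMatching_le_completeBipartiteHalves :
    shiftMatching k ≤ completeBipartiteHalves k := by
  rintro i j (h | h) <;> [left; right] <;> omega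

lemma card_le_of_forall_add_ne {s : Finset (Fin (2 * k))}
    (hs : ∀ i ∈ s, ∀ j ∈ s, (i : ℕ) + k ≠ j) : #s ≤ k := by
  set f : Fin (2 * k) → ℕ := fun i => if (i : ℕ) < k then i else i - k
  have hinj : Set.InjOn f s := by
    intro i hi j hj hij
    have := hs i hi j hj
    have := hs j hj i hi
    simp only [f] at hij
    ext
    split_ifs at hij <;> omega
  have hmaps : Set.MapsTo f s (Finset.range k) := fun i _ => by
    have := i.isLt
    simp only [f, coe_range, Set.mem_Iio]
    split_ifs <;> omega
  simpa using card_le_card_of_injOn f hmaps hinj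

instance : DecidableRel (shiftMatching k).Adj := fun _ _ => instDecidableOr

instance : DecidableRel (completeBipartiteHalves k).Adj := fun _ _ => instDecidableOr

@[simp]
lemma mem_lowerHalf {i : Fin (2 * k)} : i ∈ lowerHalf k ↔ (i : ℕ) < k := by
  simp [lowerHalf]

lemma card_lowerHalf : #(lowerHalf k) = k := by
  simp only [lowerHalf, Fin.card_filter_val_lt]
  omega

lemma card_compl_lowerHalf : #(lowerHalf k)ᶜ = k := by
  rw [card_compl, card_lowerHalf, Fintype.card_fin]
  omega

lemma isIndepSet_lowerHalf : (completeBipartiteHalves k).IsIndepSet ↑(lowerHalf k) := by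
  intro i hi j hj _ hij
  rw [mem_coe, mem_lowerHalf] at hi hj
  simp only [completeBipartiteHalves] at hij
  omega

lemma isIndepSet_compl_lowerHalf : (completeBipartiteHalves k).IsIndepSet ↑(lowerHalf k)ᶜ := by
  intro i hi j hj _ hij
  rw [mem_coe, Finset.mem_compl, mem_lowerHalf] at hi hj
  simp only [completeBipartiteHalves] at hij
  omega

theorem indepNumOn_eq_of_shiftMatching_le_of_le_completeBipartiteHalves
    {G : SimpleGraph (Fin (2 * k))} (h₁ : shiftMatching k ≤ G) (h₂ : G ≤ completeBipartiteHalves k)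
    {A : Set (Fin (2 * k))} (hA : ↑(lowerHalf k) ⊆ A ∨ ↑(lowerHalf k)ᶜ ⊆ A) :
    indepNumOn G A = k := by
  have hle (s : Finset (Fin (2 * k))) (hs : G.IsIndepSet s) : #s ≤ k :=
    card_le_of_forall_add_ne fun i hi j hj hij =>
      hs hi hj (fun h => by subst h; have := i.isLt; omega) (h₁ (Or.inl hij))
  have hanti {s : Set (Fin (2 * k))} (hs : (completeBipartiteHalves k).IsIndepSet s) :
      G.IsIndepSet s :=
    fun i hi j hj hij hadj => hs hi hj hij (h₂ hadj)
  rcases hA with hA | hA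
  · exact indepNumOn_eq_of_isNIndepSet hle ⟨hanti isIndepSet_lowerHalf, card_lowerHalf⟩ hA
  · exact indepNumOn_eq_of_isNIndepSet hle
      ⟨hanti isIndepSet_compl_lowerHalf, card_compl_lowerHalf⟩ hA

theorem indepNum_eq_and_indepNumOn_compl_singleton_eq {G : SimpleGraph (Fin (2 * k))}
    (h₁ : shiftMatching k ≤ G) (h₂ : G ≤ completeBipartiteHalves k) :
    _root_.indepNum G = k ∧ ∀ v, indepNumOn G {v}ᶜ = k := by
  refine ⟨indepNumOn_eq_of_shiftMatching_le_of_le_completeBipartiteHalves h₁ h₂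
    (Or.inl (Set.subset_univ _)), fun v => ?_⟩
  refine indepNumOn_eq_of_shiftMatching_le_of_le_completeBipartiteHalves h₁ h₂ ?_
  by_cases hv : v ∈ lowerHalf k
  · exact Or.inr fun i hi hiv => Finset.mem_compl.1 hi (Set.mem_singleton_iff.1 hiv ▸ hv)
  · exact Or.inl fun i hi hiv => hv (Set.mem_singleton_iff.1 hiv ▸ hi)

lemma isRegularOfDegree_shiftMatching : (shiftMatching k).IsRegularOfDegree 1 := by
  intro v
  rw [degree_eq_one_iff_existsUnique_adj]
  have := v.isLt
  by_cases hv : (v : ℕ) < k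
  · refine ⟨⟨v + k, by omega⟩, Or.inl rfl, fun w hw => ?_⟩
    have := w.isLt
    ext
    simp only [shiftMatching] at hw ⊢
    omega
  · refine ⟨⟨v - k, by omega⟩, Or.inr (by simp only; omega), fun w hw => ?_⟩
    have := w.isLt
    ext
    simp only [shiftMatching] at hw ⊢
    omega

lemma isRegularOfDegree_completeBipartiteHalves :
    (completeBipartiteHalves k).IsRegularOfDegree k := by
  intro v
  rw [← card_neighborFinset_eq_degree]
  by_cases hv : (v : ℕ) < k
  · convert card_compl_lowerHalf (k := k) using 2
    ext w
    rw [mem_neighborFinset, Finset.mem_compl, mem_lowerHalf]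
    simp only [completeBipartiteHalves]
    omega
  · convert card_lowerHalf (k := k) using 2
    ext w
    rw [mem_neighborFinset, mem_lowerHalf]
    simp only [completeBipartiteHalves]
    omega

lemma ncard_edgeSet_shiftMatching : (shiftMatching k).edgeSet.ncard = k := by
  have := (isRegularOfDegree_shiftMatching (k := k)).two_mul_card_edgeFinset
  rw [Fintype.card_fin] at this
  rw [ncard_edgeSet]
  omega

lemma ncard_edgeSet_completeBipartiteHalves :
    (completeBipartiteHalves k).edgeSet.ncard = k ^ 2 := by
  have := (isRegularOfDegree_completeBipartiteHalves (k := k)).two_mul_card_edgeFinset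
  rw [Fintype.card_fin] at this
  rw [ncard_edgeSet]
  nlinarith

end Examples

theorem tight_one_zero_edge_bounds {V : Type*} [Fintype V] (G : SimpleGraph V) (k : ℕ)
    (hcard : Fintype.card V = 2 * k) (halpha : _root_.indepNum G = k)
    (hstable : ∀ v : V, indepNumOn G ({v} : Set V)ᶜ = k) :
    (k ≤ G.edgeSet.ncard ∧ G.edgeSet.ncard ≤ k ^ 2) ∧
    (∃ G₁ : SimpleGraph (Fin (2 * k)), _root_.indepNum G₁ = k ∧
      (∀ v, indepNumOn G₁ ({v} : Set (Fin (2 * k)))ᶜ = k) ∧ G₁.edgeSet.ncard = k) ∧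
    (∃ G₂ : SimpleGraph (Fin (2 * k)), _root_.indepNum G₂ = k ∧
      (∀ v, indepNumOn G₂ ({v} : Set (Fin (2 * k)))ᶜ = k) ∧ G₂.edgeSet.ncard = k ^ 2) := by
  classical
  rw [indepNum_eq_indepNum] at halpha
  have hmiss (v : V) : ∃ s, v ∉ s ∧ G.IsNIndepSet G.indepNum s := by
    obtain ⟨s, hsv, hs⟩ := exists_isNIndepSet_indepNumOn G {v}ᶜ
    rw [hstable, ← halpha] at hs
    exact ⟨s, fun hv => hsv hv rfl, hs⟩
  have hdeg_le (v : V) : G.degree v ≤ k := by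
    obtain ⟨s, hvs, hs⟩ := G.exists_mem_isNIndepSet hmiss (by omega) v
    have := hs.isIndepSet.degree_add_card_le hvs
    rw [hs.card_eq] at this
    omega
  have hlower := card_mul_le_two_mul_card_edgeFinset (G.degree_pos_of_forall_exists_notMem hmiss)
  have hupper := two_mul_card_edgeFinset_le_mul hdeg_le
  rw [hcard] at hlower hupper
  rw [G.ncard_edgeSet]
  refine ⟨⟨by omega, by nlinarith⟩, ⟨shiftMatching k, ?_⟩, ⟨completeBipartiteHalves k, ?_⟩⟩
  · exact and_assoc.1 ⟨indepNum_eq_and_indepNumOn_compl_singleton_eq le_rfl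
      shiftMatching_le_completeBipartiteHalves, ncard_edgeSet_shiftMatching⟩
  · exact and_assoc.1 ⟨indepNum_eq_and_indepNumOn_compl_singleton_eq
      shiftMatching_le_completeBipartiteHalves le_rfl, ncard_edgeSet_completeBipartiteHalves⟩
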